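/- β_{0,2}(n, 3) = 2 for all sufficiently large n; that is, the maximum over 3-uniform intersecting families F ⊆ binomial([n],3) of min over pairs {x,y} ⊆ [n] of the number of members of F disjoint from {x,y}, equals 2. -/

import Mathlib

/-- A family of finite sets is intersecting if any two members meet. -/
def Intersecting (F : Finset (Finset ℕ)) : Prop :=
  ∀ A ∈ F, ∀ B ∈ F, (A ∩ B).Nonempty

/-- `X` is a cover (transversal) of `F`: it meets every member. -/
def IsCover (F : Finset (Finset ℕ)) (X : Finset ℕ) : Prop :=
  ∀ A ∈ F, (X ∩ A).Nonempty

/-- `X` is a minimal cover of `F`. -/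
def IsMinCover (F : Finset (Finset ℕ)) (X : Finset ℕ) : Prop :=
  IsCover F X ∧ ∀ Y ⊂ X, ¬ IsCover F Y

/-- The covering number `τ(F)`: minimum size of a cover. -/
noncomputable def coverNum (F : Finset (Finset ℕ)) : ℕ :=
  sInf {m | ∃ X : Finset ℕ, X.card = m ∧ IsCover F X}

/-- `F(A, B̄)`: members of `F` containing `A` and disjoint from `B`. -/
def famAB (F : Finset (Finset ℕ)) (A B : Finset ℕ) : Finset (Finset ℕ) :=
  F.filter fun S => A ⊆ S ∧ Disjoint B S

/-- The `(p,q)`-dömdödöm of `F` with ground set `[n]` (here `Finset.range n`):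
the minimum of `|F(A, B̄)|` over disjoint `A, B ⊆ [n]` with `|A| = p`, `|B| = q`. -/
noncomputable def beta (n p q : ℕ) (F : Finset (Finset ℕ)) : ℕ :=
  sInf {m | ∃ A B : Finset ℕ, A ⊆ Finset.range n ∧ B ⊆ Finset.range n ∧
    Disjoint A B ∧ A.card = p ∧ B.card = q ∧ m = (famAB F A B).card}

/-!
Lower bound: the seven lines of the Fano plane form an intersecting family in which every pair
of points misses exactly two lines.

Upper bound: fix a member `{a, b, c}` of `F`. If more than two members avoid `{b, c}`, they all
contain `a`. If two of them share a further point `x`, every member avoiding `{a, x}` consists of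
their two remaining points and one of `b`, `c`, so there are at most two such members. Otherwise
these members together with `{a, b, c}` form a sunflower with kernel `{a}` and at least four
petals; a `3`-set meeting all petals must contain the kernel, so every member contains `a` and
none avoids `{a, b}`.
-/

open Finset

lemma mem_of_inter_insert_nonempty {M s : Finset ℕ} {u : ℕ} (h : (M ∩ insert u s).Nonempty)
    (hs : Disjoint s M) : u ∈ M := by
  obtain ⟨y, hy⟩ := h
  obtain ⟨hyM, rfl | hys⟩ := (mem_inter.1 hy).imp_right mem_insert.1
  exacts [hyM, absurd hyM (disjoint_left.1 hs hys)]

lemma exists_eq_insert_pair_of_card_eq_three {S : Finset ℕ} (hS : S.card = 3) {a x : ℕ}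
    (ha : a ∈ S) (hx : x ∈ S) (hax : a ≠ x) : ∃ s, S = insert s {a, x} := by
  have hxa : x ∈ S.erase a := mem_erase.2 ⟨hax.symm, hx⟩
  obtain ⟨s, hs⟩ := card_eq_one.1 (by
    rw [card_erase_of_mem hxa, card_erase_of_mem ha, hS] : ((S.erase a).erase x).card = 1)
  refine ⟨s, ?_⟩
  calc S = {a, x, s} := by rw [← hs, insert_erase hxa, insert_erase ha]
    _ = insert s {a, x} := by rw [pair_comm x s, insert_comm a s]

lemma mem_of_isCover_of_pairwise_inter_subset {P : Finset (Finset ℕ)} {a : ℕ}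
    {M : Finset ℕ} (hP : (P : Set (Finset ℕ)).Pairwise fun S T => S ∩ T ⊆ {a})
    (hM : IsCover P M) (hcard : M.card < P.card) : a ∈ M := by
  by_contra ha
  refine hcard.not_ge (card_le_card_of_forall_subsingleton (fun S w => w ∈ S)
    (fun S hS => ?_) fun w hw S hS T hT => ?_)
  · obtain ⟨w, hw⟩ := hM S hS
    exact ⟨w, (mem_inter.1 hw).1, (mem_inter.1 hw).2⟩
  · by_contra hST
    have := hP hS.1 hT.1 hST (mem_inter.2 ⟨hS.2, hT.2⟩)
    exact ha (mem_singleton.1 this ▸ hw)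

lemma card_le_card_of_isCover_of_forall_card_eq_succ {G : Finset (Finset ℕ)}
    {K B : Finset ℕ} (hKB : Disjoint K B) (hB : IsCover G B)
    (hG : ∀ M ∈ G, K ⊆ M ∧ M.card = K.card + 1) : G.card ≤ B.card := by
  have eq_insert : ∀ M ∈ G, ∀ y ∈ B, y ∈ M → M = insert y K := fun M hM y hyB hyM =>
    (eq_of_subset_of_card_le (insert_subset hyM (hG M hM).1) (by
      rw [(hG M hM).2, card_insert_of_notMem (disjoint_right.1 hKB hyB)])).symm
  refine card_le_card_of_forall_subsingleton (fun M y => y ∈ M) (fun M hM => ?_)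
    fun y hy M hM M' hM' => ?_
  · obtain ⟨y, hy⟩ := hB M hM
    exact ⟨y, (mem_inter.1 hy).1, (mem_inter.1 hy).2⟩
  · rw [eq_insert M hM.1 y hy hM.2, eq_insert M' hM'.1 y hy hM'.2]

lemma card_filter_disjoint_le_two_of_pair_subset_inter {F : Finset (Finset ℕ)}
    (hF3 : ∀ M ∈ F, M.card = 3) (hI : Intersecting F) {a b c x : ℕ} (hA : {a, b, c} ∈ F)
    {S T : Finset ℕ} (hS : S ∈ F) (hT : T ∈ F) (hST : S ≠ T) (hSbc : Disjoint {b, c} S)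
    (hTbc : Disjoint {b, c} T) (hax : a ≠ x) (haxST : {a, x} ⊆ S ∩ T) :
    (F.filter (Disjoint {a, x} ·)).card ≤ 2 := by
  simp only [insert_subset_iff, singleton_subset_iff, mem_inter] at haxST
  obtain ⟨⟨haS, haT⟩, hxS, hxT⟩ := haxST
  obtain ⟨s, rfl⟩ := exists_eq_insert_pair_of_card_eq_three (hF3 S hS) haS hxS hax
  obtain ⟨t, rfl⟩ := exists_eq_insert_pair_of_card_eq_three (hF3 T hT) haT hxT hax
  have hst : s ≠ t := by rintro rfl; exact hST rfl
  refine (card_le_card_of_isCover_of_forall_card_eq_succ (K := {s, t}) (B := {b, c})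
    ?_ ?_ ?_).trans card_le_two
  · rw [disjoint_insert_left, disjoint_singleton_left]
    exact ⟨disjoint_right.1 hSbc (by simp), disjoint_right.1 hTbc (by simp)⟩
  · intro M hM
    obtain ⟨hMF, hM⟩ := mem_filter.1 hM
    have hMA := hI M hMF _ hA
    rwa [inter_insert_of_notMem (disjoint_left.1 hM (mem_insert_self a _)), inter_comm] at hMA
  · intro M hM
    obtain ⟨hMF, hM⟩ := mem_filter.1 hM
    exact ⟨insert_subset (mem_of_inter_insert_nonempty (hI M hMF _ hS) hM)
      (singleton_subset_iff.2 (mem_of_inter_insert_nonempty (hI M hMF _ hT) hM)),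
      by rw [hF3 M hMF, card_pair hst]⟩

theorem exists_pair_subset_mem_card_filter_disjoint_le_two {F : Finset (Finset ℕ)}
    (hF3 : ∀ M ∈ F, M.card = 3) (hI : Intersecting F) (hF : F.Nonempty) :
    ∃ M ∈ F, ∃ Q ⊆ M, Q.card = 2 ∧ (F.filter (Disjoint Q ·)).card ≤ 2 := by
  obtain ⟨A, hA⟩ := hF
  obtain ⟨a, b, c, hab, -, hbc, rfl⟩ := card_eq_three.1 (hF3 A hA)
  set G := F.filter (Disjoint {b, c} ·)
  by_cases hG : G.card ≤ 2
  · exact ⟨_, hA, {b, c}, subset_insert a _, card_pair hbc, hG⟩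
  by_cases hsun : (G : Set (Finset ℕ)).Pairwise fun S T => S ∩ T ⊆ {a}
  · have hAG : {a, b, c} ∉ G := fun h =>
      disjoint_left.1 (mem_filter.1 h).2 (mem_insert_self b _) (by simp)
    have hP : ((insert {a, b, c} G : Finset _) : Set (Finset ℕ)).Pairwise
        fun S T => S ∩ T ⊆ {a} := by
      rw [coe_insert]
      refine hsun.insert fun S hS _ => ?_
      have hAS : {a, b, c} ∩ S ⊆ {a} := fun y hy => by
        obtain ⟨hyA, hyS⟩ := mem_inter.1 hy
        rcases mem_insert.1 hyA with rfl | hybc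
        exacts [mem_singleton_self y, absurd hyS (disjoint_left.1 (mem_filter.1 hS).2 hybc)]
      exact ⟨hAS, inter_comm S _ ▸ hAS⟩
    have haF : ∀ M ∈ F, a ∈ M := fun M hM =>
      mem_of_isCover_of_pairwise_inter_subset hP
        (fun S hS => hI M hM S (insert_subset hA (filter_subset _ F) hS))
        (by rw [hF3 M hM, card_insert_of_notMem hAG]; omega)
    refine ⟨_, hA, {a, b}, by simp [insert_subset_iff], card_pair hab, ?_⟩
    rw [filter_false_of_mem fun M hM => not_disjoint_iff.2 ⟨a, mem_insert_self a _, haF M hM⟩]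
    simp
  · simp only [Set.Pairwise, not_forall] at hsun
    obtain ⟨S, hS, T, hT, hST, hsub⟩ := hsun
    obtain ⟨x, hxST, hxa⟩ := not_subset.1 hsub
    have hax : a ≠ x := fun h => hxa (h ▸ mem_singleton_self a)
    obtain ⟨hSF, hSbc⟩ := mem_filter.1 hS
    obtain ⟨hTF, hTbc⟩ := mem_filter.1 hT
    have haxST : {a, x} ⊆ S ∩ T := insert_subset
      (mem_inter.2 ⟨mem_of_inter_insert_nonempty (hI S hSF _ hA) hSbc,
        mem_of_inter_insert_nonempty (hI T hTF _ hA) hTbc⟩)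
      (singleton_subset_iff.2 hxST)
    exact ⟨S, hSF, {a, x}, haxST.trans inter_subset_left, card_pair hax,
      card_filter_disjoint_le_two_of_pair_subset_inter hF3 hI hA hSF hTF hST hSbc hTbc hax haxST⟩

lemma famAB_empty_left (F : Finset (Finset ℕ)) (B : Finset ℕ) :
    famAB F ∅ B = F.filter (Disjoint B ·) := by
  simp [famAB]

lemma beta_le_card_famAB {n p q : ℕ} {F : Finset (Finset ℕ)} {A B : Finset ℕ}
    (hA : A ⊆ range n) (hB : B ⊆ range n) (hAB : Disjoint A B) (hp : A.card = p)
    (hq : B.card = q) : beta n p q F ≤ (famAB F A B).card :=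
  Nat.sInf_le ⟨A, B, hA, hB, hAB, hp, hq, rfl⟩

lemma le_beta {n p q k : ℕ} {F : Finset (Finset ℕ)} (hpq : p + q ≤ n)
    (h : ∀ A B : Finset ℕ, A ⊆ range n → B ⊆ range n → Disjoint A B → A.card = p →
      B.card = q → k ≤ (famAB F A B).card) : k ≤ beta n p q F := by
  refine le_csInf ⟨_, range p, Ico p (p + q), range_subset_range.2 (by omega), ?_,
    ?_, card_range p, by simp, rfl⟩ ?_
  · intro y hy
    simp only [mem_Ico, mem_range] at hy ⊢
    omega
  · rw [range_eq_Ico]; exact Ico_disjoint_Ico_consecutive 0 p (p + q)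
  · rintro m ⟨A, B, hA, hB, hAB, hp, hq, rfl⟩
    exact h A B hA hB hAB hp hq

lemma beta_zero_two_le_two {n : ℕ} (hn : 2 ≤ n) {F : Finset (Finset ℕ)}
    (hF : F ⊆ (range n).powersetCard 3) (hI : Intersecting F) : beta n 0 2 F ≤ 2 := by
  rcases F.eq_empty_or_nonempty with rfl | hne
  · refine (beta_le_card_famAB (A := ∅) (B := {0, 1}) (empty_subset _) ?_
      (disjoint_empty_left _) rfl rfl).trans (by simp [famAB])
    simp only [insert_subset_iff, singleton_subset_iff, mem_range]
    omega
  obtain ⟨M, hM, Q, hQM, hQ, hle⟩ := exists_pair_subset_mem_card_filter_disjoint_le_two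
    (fun M hM => (mem_powersetCard.1 (hF hM)).2) hI hne
  refine (beta_le_card_famAB (empty_subset _) (hQM.trans (mem_powersetCard.1 (hF hM)).1)
    (disjoint_empty_left _) card_empty hQ).trans ?_
  rwa [famAB_empty_left]

def fanoPlane : Finset (Finset ℕ) :=
  {{0, 1, 2}, {0, 3, 4}, {0, 5, 6}, {1, 3, 5}, {1, 4, 6}, {2, 3, 6}, {2, 4, 5}}

lemma fanoPlane_subset_powersetCard : fanoPlane ⊆ (range 7).powersetCard 3 := by
  decide

lemma intersecting_fanoPlane : Intersecting fanoPlane := by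
  unfold Intersecting
  decide

lemma two_le_card_filter_disjoint_fanoPlane {Q : Finset ℕ} (hQ : Q.card ≤ 2) :
    2 ≤ (fanoPlane.filter (Disjoint Q ·)).card := by
  have key : ∀ Q ∈ (range 7).powerset, Q.card ≤ 2 →
      2 ≤ (fanoPlane.filter (Disjoint Q ·)).card := by
    set_option maxRecDepth 10000 in decide
  have hQ7 : fanoPlane.filter (Disjoint Q ·) = fanoPlane.filter (Disjoint (Q ∩ range 7) ·) :=
    filter_congr fun S hS => by
      rw [← inf_eq_inter, disjoint_assoc, inf_eq_inter,
        inter_eq_right.2 (mem_powersetCard.1 (fanoPlane_subset_powersetCard hS)).1]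
  rw [hQ7]
  exact key _ (mem_powerset.2 inter_subset_right) ((card_le_card inter_subset_left).trans hQ)

lemma beta_fanoPlane {n : ℕ} (hn : 7 ≤ n) : beta n 0 2 fanoPlane = 2 := by
  refine le_antisymm ((beta_le_card_famAB (A := ∅) (B := {0, 1}) (empty_subset _) ?_
    (disjoint_empty_left _) rfl rfl).trans_eq ?_) (le_beta (by omega) fun A B _ _ _ hA hB => ?_)
  · simp only [insert_subset_iff, singleton_subset_iff, mem_range]
    omega
  · rw [famAB_empty_left]
    decide
  · rw [card_eq_zero.1 hA, famAB_empty_left]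
    exact two_le_card_filter_disjoint_fanoPlane hB.le

/-- β_{0,2}(n,3) = 2 for all large n. -/
theorem beta_zero_two_three : ∃ n₀ : ℕ, ∀ n ≥ n₀,
    (∃ F : Finset (Finset ℕ), F ⊆ (Finset.range n).powersetCard 3 ∧ Intersecting F ∧
      beta n 0 2 F = 2) ∧
    (∀ F : Finset (Finset ℕ), F ⊆ (Finset.range n).powersetCard 3 → Intersecting F →
      beta n 0 2 F ≤ 2) :=
  ⟨7, fun n hn => ⟨⟨fanoPlane,
    fanoPlane_subset_powersetCard.trans (powersetCard_mono (range_subset_range.2 hn)),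
    intersecting_fanoPlane, beta_fanoPlane hn⟩,
    fun _ hF hI => beta_zero_two_le_two (by omega) hF hI⟩⟩
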